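/- arXiv:2002.12670 — 3 statements merged into one kernel-verified Lean document; each statement's English description precedes it below -/
import Mathlib

section
/- Let H₁ and H be real Hilbert spaces and M : H₁ → H a bounded linear operator for which there exists θ > 0 with ‖Mx‖ ≥ θ‖x‖ for all x ∈ H₁. If (u^k) is a sequence in H₁ such that (Mu^k) converges weakly to some z ∈ H, then z lies in the range of M and the sequence (u^k) converges weakly to the unique u* ∈ H₁ with Mu* = z. -/
open Filter Topology Pointwise
open scoped RealInnerProductSpace

noncomputable section

/-- `f` is proper, convex and lower semicontinuous (extended-real-valued). -/
def ProperConvexLSC {H : Type*} [NormedAddCommGroup H] [InnerProductSpace ℝ H]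
    (f : H → EReal) : Prop :=
  (∀ x, f x ≠ ⊥) ∧ (∃ x, f x ≠ ⊤) ∧
    (∀ x y : H, ∀ a b : ℝ, 0 ≤ a → 0 ≤ b → a + b = 1 →
      f (a • x + b • y) ≤ (a : EReal) * f x + (b : EReal) * f y) ∧
    LowerSemicontinuous f

/-- The convex subdifferential `∂f(x)`. -/
def subdiff {H : Type*} [NormedAddCommGroup H] [InnerProductSpace ℝ H]
    (f : H → EReal) (x : H) : Set H :=
  {w | ∀ z, f x + ((⟪w, z - x⟫ : ℝ) : EReal) ≤ f z}

/-- Weak convergence of a sequence in a Hilbert space. -/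
def WeakTendsto {H : Type*} [NormedAddCommGroup H] [InnerProductSpace ℝ H]
    (x : ℕ → H) (l : H) : Prop :=
  ∀ z : H, Tendsto (fun k => ⟪x k, z⟫) atTop (𝓝 (⟪l, z⟫ : ℝ))

/-- The Fenchel conjugate `f*(w) = sup_x (⟪x, w⟫ - f x)`. -/
def fconj {H : Type*} [NormedAddCommGroup H] [InnerProductSpace ℝ H]
    (f : H → EReal) (w : H) : EReal :=
  ⨆ x, (((⟪x, w⟫ : ℝ) : EReal) - f x)

/-!
Since `M` is bounded below, its range is complete, hence weakly closed, so `z = M u*`. The form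
`⟪M x, M y⟫` is coercive, so by Lax–Milgram every `w` is `M†M x` for some `x`, and then
`⟪u k, w⟫ = ⟪M (u k), M x⟫ → ⟪M u*, M x⟫ = ⟪u*, w⟫`.
-/

section BoundedBelow

variable {E F : Type*} [NormedAddCommGroup E] [InnerProductSpace ℝ E]
  [NormedAddCommGroup F] [InnerProductSpace ℝ F]

theorem WeakTendsto.mem_of_forall_mem {K : Submodule ℝ E} [K.HasOrthogonalProjection]
    {x : ℕ → E} {z : E} (hx : WeakTendsto x z) (hxK : ∀ k, x k ∈ K) : z ∈ K := by
  rw [← K.orthogonal_orthogonal]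
  intro w hw
  have hzero : (fun k => ⟪x k, w⟫) = fun _ => (0 : ℝ) :=
    funext fun k => (K.mem_orthogonal w).mp hw _ (hxK k)
  have hlim := hx w
  rw [hzero] at hlim
  rw [real_inner_comm]
  exact tendsto_nhds_unique hlim tendsto_const_nhds

namespace ContinuousLinearMap

variable {θ : ℝ} {M : E →L[ℝ] F}

theorem antilipschitz_of_mul_norm_le (hθ : 0 < θ) (hM : ∀ x, θ * ‖x‖ ≤ ‖M x‖) :
    AntilipschitzWith θ⁻¹.toNNReal M := by
  refine M.antilipschitz_of_bound fun x => ?_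
  rw [Real.coe_toNNReal _ (inv_pos.mpr hθ).le, inv_mul_eq_div, le_div_iff₀ hθ, mul_comm]
  exact hM x

theorem completeSpace_range_of_antilipschitz [CompleteSpace E] {K : NNReal}
    (hM : AntilipschitzWith K M) : CompleteSpace (LinearMap.range (M : E →ₗ[ℝ] F)) :=
  completeSpace_coe_iff_isComplete.mpr <| by
    rw [LinearMap.coe_range, coe_coe]
    exact hM.isComplete_range M.uniformContinuous

theorem isCoercive_bilinearComp_innerSL (hθ : 0 < θ) (hM : ∀ x, θ * ‖x‖ ≤ ‖M x‖) :
    IsCoercive ((innerSL ℝ).bilinearComp M M) := by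
  refine ⟨θ ^ 2, by positivity, fun x => ?_⟩
  calc θ ^ 2 * ‖x‖ * ‖x‖ = (θ * ‖x‖) * (θ * ‖x‖) := by ring
    _ ≤ ‖M x‖ * ‖M x‖ := mul_le_mul (hM x) (hM x) (by positivity) (norm_nonneg _)
    _ = (innerSL ℝ).bilinearComp M M x x := by simp [sq]

theorem exists_inner_eq_inner_map [CompleteSpace E] (hθ : 0 < θ)
    (hM : ∀ x, θ * ‖x‖ ≤ ‖M x‖) (w : E) : ∃ x, ∀ y, ⟪y, w⟫ = ⟪M y, M x⟫ := by
  have hB := isCoercive_bilinearComp_innerSL hθ hM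
  obtain ⟨x, rfl⟩ := hB.continuousLinearEquivOfBilin.surjective w
  refine ⟨x, fun y => ?_⟩
  rw [real_inner_comm, hB.continuousLinearEquivOfBilin_apply, real_inner_comm]
  rfl

end ContinuousLinearMap

theorem WeakTendsto.of_map [CompleteSpace E] {θ : ℝ} {M : E →L[ℝ] F} (hθ : 0 < θ)
    (hM : ∀ x, θ * ‖x‖ ≤ ‖M x‖) {u : ℕ → E} {l : E}
    (h : WeakTendsto (fun k => M (u k)) (M l)) : WeakTendsto u l := by
  intro w
  obtain ⟨x, hx⟩ := M.exists_inner_eq_inner_map hθ hM w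
  simp only [hx]
  exact h (M x)

end BoundedBelow

theorem weak_convergence_transfer_of_bounded_below_general
    {H₁ H : Type*} [NormedAddCommGroup H₁] [InnerProductSpace ℝ H₁] [CompleteSpace H₁]
    [NormedAddCommGroup H] [InnerProductSpace ℝ H]
    (M : H₁ →L[ℝ] H) (θ : ℝ) (hθ : 0 < θ) (hM : ∀ x, θ * ‖x‖ ≤ ‖M x‖)
    (u : ℕ → H₁) (z : H) (hconv : WeakTendsto (fun k => M (u k)) z) :
    z ∈ Set.range M ∧
      ∃ us : H₁, M us = z ∧ WeakTendsto u us ∧ ∀ u' : H₁, M u' = z → u' = us := by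
  have hanti := M.antilipschitz_of_mul_norm_le hθ hM
  have := M.completeSpace_range_of_antilipschitz hanti
  obtain ⟨us, rfl⟩ : z ∈ LinearMap.range (M : H₁ →ₗ[ℝ] H) :=
    hconv.mem_of_forall_mem fun k => ⟨u k, rfl⟩
  exact ⟨⟨us, rfl⟩, us, rfl, hconv.of_map hθ hM, fun u' hu' => hanti.injective hu'⟩

theorem weak_convergence_transfer_of_bounded_below
    {H₁ H : Type*} [NormedAddCommGroup H₁] [InnerProductSpace ℝ H₁] [CompleteSpace H₁]
    [NormedAddCommGroup H] [InnerProductSpace ℝ H] [CompleteSpace H]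
    (M : H₁ →L[ℝ] H) (θ : ℝ) (hθ : 0 < θ) (hM : ∀ x, θ * ‖x‖ ≤ ‖M x‖)
    (u : ℕ → H₁) (z : H) (hconv : WeakTendsto (fun k => M (u k)) z) :
    z ∈ Set.range M ∧
      ∃ us : H₁, M us = z ∧ WeakTendsto u us ∧ ∀ u' : H₁, M u' = z → u' = us :=
  weak_convergence_transfer_of_bounded_below_general M θ hθ hM u z hconv
end
end

section
/- Let H, H₁, H₂ be real Hilbert spaces, F : H₁ → (−∞,+∞] and G : H₂ → (−∞,+∞] proper, convex, lower semicontinuous, M : H₁ → H and N : H₂ → H bounded linear operators with adjoints M* and N*, and b ∈ H. Let (u*, v*) satisfy Mu* + Nv* = b with F(u*) and G(v*) finite, and let sequences (u^{k+1}) in H₁, (v^k) in H₂, (y^k) and (x^k) in H satisfy −N*y^k ∈ ∂G(v^k) and −M*x^k ∈ ∂F(u^{k+1}) for all k, ‖y^k − x^k‖ → 0, ‖Mu^{k+1} + Nv^k − b‖ → 0, (Mu^{k+1}) converges weakly to Mu*, and (y^k) is bounded. Then limsup_{k→+∞} (F(u^{k+1}) + G(v^k)) ≤ F(u*) + G(v*).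 -/
open Filter Topology Pointwise
open scoped RealInnerProductSpace

noncomputable section

/-! Testing the subgradient inequalities for `∂F(u^{k+1})` and `∂G(v^k)` at `u*` and `v*` gives
`F(u^{k+1}) + G(v^k) ≤ F(u*) + G(v*) - e_k` with, using `b = Mu* + Nv*`,
`e_k = ⟪x^k - y^k, Mu^{k+1} - Mu*⟫ + ⟪y^k, Mu^{k+1} + Nv^k - b⟫`.
Both terms pair a vanishing sequence with a bounded one (a weakly convergent sequence is bounded
by the uniform boundedness principle), so `e_k → 0`. -/

theorem WeakTendsto.exists_norm_le {H : Type*} [NormedAddCommGroup H] [InnerProductSpace ℝ H]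
    [CompleteSpace H] {x : ℕ → H} {l : H} (hx : WeakTendsto x l) : ∃ C, ∀ k, ‖x k‖ ≤ C := by
  have hpointwise : ∀ z, ∃ C, ∀ k, ‖InnerProductSpace.toDual ℝ H (x k) z‖ ≤ C := fun z => by
    obtain ⟨C, hC⟩ := (hx z).norm.bddAbove_range
    exact ⟨C, fun k => by simpa using hC ⟨k, rfl⟩⟩
  obtain ⟨C, hC⟩ := banach_steinhaus hpointwise
  exact ⟨C, fun k => by simpa using hC k⟩

theorem le_coe_sub_inner_of_mem_subdiff {H : Type*} [NormedAddCommGroup H]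
    [InnerProductSpace ℝ H] {f : H → EReal} {x w z : H} {a : ℝ} (hw : w ∈ subdiff f x)
    (hz : f z = a) : f x ≤ ((a - ⟪w, z - x⟫ : ℝ) : EReal) := by
  have h := add_le_add (hw z) (le_refl ((-⟪w, z - x⟫ : ℝ) : EReal))
  rwa [add_assoc, ← EReal.coe_add, add_neg_cancel, EReal.coe_zero, add_zero, hz,
    ← EReal.coe_add, ← sub_eq_add_neg] at h

theorem tendsto_inner_zero_of_norm_tendsto_zero {ι H : Type*} [NormedAddCommGroup H]
    [InnerProductSpace ℝ H] {l : Filter ι} {a b : ι → H} (ha : Tendsto (‖a ·‖) l (𝓝 0))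
    {C : ℝ} (hb : ∀ i, ‖b i‖ ≤ C) : Tendsto (fun i => ⟪a i, b i⟫) l (𝓝 0) := by
  refine squeeze_zero_norm (fun i => ?_) (by simpa using ha.mul_const C)
  calc ‖⟪a i, b i⟫‖ ≤ ‖a i‖ * ‖b i‖ := norm_inner_le_norm _ _
    _ ≤ ‖a i‖ * C := mul_le_mul_of_nonneg_left (hb i) (norm_nonneg _)

theorem EReal.limsup_le_of_le_coe_of_tendsto {ι : Type*} {l : Filter ι} [l.NeBot]
    {f : ι → EReal} {r : ι → ℝ} {L : ℝ} (hfr : ∀ i, f i ≤ r i) (hr : Tendsto r l (𝓝 L)) :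
    limsup f l ≤ L := by
  calc limsup f l ≤ limsup (fun i => (r i : EReal)) l := limsup_le_limsup (.of_forall hfr)
    _ = L := ((continuous_coe_real_ereal.tendsto L).comp hr).limsup_eq

theorem primal_values_limsup_le_general
    {H H₁ H₂ : Type*}
    [NormedAddCommGroup H] [InnerProductSpace ℝ H] [CompleteSpace H]
    [NormedAddCommGroup H₁] [InnerProductSpace ℝ H₁] [CompleteSpace H₁]
    [NormedAddCommGroup H₂] [InnerProductSpace ℝ H₂] [CompleteSpace H₂]
    (F : H₁ → EReal) (G : H₂ → EReal)
    (M : H₁ →L[ℝ] H) (N : H₂ →L[ℝ] H) (b : H)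
    (us : H₁) (vs : H₂) (hfeas : M us + N vs = b)
    (hFfin : F us ≠ ⊤ ∧ F us ≠ ⊥) (hGfin : G vs ≠ ⊤ ∧ G vs ≠ ⊥)
    (u : ℕ → H₁) (v : ℕ → H₂) (y x : ℕ → H)
    (hG' : ∀ k, -(ContinuousLinearMap.adjoint N (y k)) ∈ subdiff G (v k))
    (hF' : ∀ k, -(ContinuousLinearMap.adjoint M (x k)) ∈ subdiff F (u (k + 1)))
    (hyx : Tendsto (fun k => ‖y k - x k‖) atTop (𝓝 0))
    (hres : Tendsto (fun k => ‖M (u (k + 1)) + N (v k) - b‖) atTop (𝓝 0))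
    (hMu : WeakTendsto (fun k => M (u (k + 1))) (M us))
    (hybdd : ∃ C : ℝ, ∀ k, ‖y k‖ ≤ C) :
    Filter.limsup (fun k => F (u (k + 1)) + G (v k)) atTop ≤ F us + G vs := by
  subst hfeas
  obtain ⟨C, hC⟩ := hybdd
  obtain ⟨D, hD⟩ := hMu.exists_norm_le
  obtain ⟨a, ha⟩ : ∃ a : ℝ, F us = a := ⟨_, (EReal.coe_toReal hFfin.1 hFfin.2).symm⟩
  obtain ⟨g, hg⟩ : ∃ g : ℝ, G vs = g := ⟨_, (EReal.coe_toReal hGfin.1 hGfin.2).symm⟩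
  set e : ℕ → ℝ := fun k =>
    ⟪x k - y k, M (u (k + 1)) - M us⟫ + ⟪y k, M (u (k + 1)) + N (v k) - (M us + N vs)⟫
  have hvalues : ∀ k, F (u (k + 1)) + G (v k) ≤ ((a + g - e k : ℝ) : EReal) := fun k => by
    calc F (u (k + 1)) + G (v k)
        ≤ ((a - ⟪-(ContinuousLinearMap.adjoint M (x k)), us - u (k + 1)⟫ : ℝ) : EReal) +
          ((g - ⟪-(ContinuousLinearMap.adjoint N (y k)), vs - v k⟫ : ℝ) : EReal) :=
        add_le_add (le_coe_sub_inner_of_mem_subdiff (hF' k) ha)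
          (le_coe_sub_inner_of_mem_subdiff (hG' k) hg)
      _ = ((a + g - e k : ℝ) : EReal) := by
        rw [← EReal.coe_add]
        simp only [e, inner_neg_left, ContinuousLinearMap.adjoint_inner_left,
          inner_sub_left, inner_sub_right, inner_add_right]
        ring_nf
  have he : Tendsto e atTop (𝓝 0) := by
    have hleft := tendsto_inner_zero_of_norm_tendsto_zero
      (a := fun k => x k - y k) (b := fun k => M (u (k + 1)) - M us)
      (by simpa only [norm_sub_rev] using hyx)
      (fun k => (norm_sub_le _ _).trans (add_le_add_left (hD k) _))
    have hright := tendsto_inner_zero_of_norm_tendsto_zero hres hC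
    simpa only [real_inner_comm, add_zero] using hleft.add hright
  calc limsup (fun k => F (u (k + 1)) + G (v k)) atTop ≤ ((a + g - 0 : ℝ) : EReal) :=
        EReal.limsup_le_of_le_coe_of_tendsto hvalues (tendsto_const_nhds.sub he)
    _ = F us + G vs := by rw [ha, hg, sub_zero, EReal.coe_add]

theorem primal_values_limsup_le
    {H H₁ H₂ : Type*}
    [NormedAddCommGroup H] [InnerProductSpace ℝ H] [CompleteSpace H]
    [NormedAddCommGroup H₁] [InnerProductSpace ℝ H₁] [CompleteSpace H₁]
    [NormedAddCommGroup H₂] [InnerProductSpace ℝ H₂] [CompleteSpace H₂]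
    (F : H₁ → EReal) (G : H₂ → EReal)
    (hF : ProperConvexLSC F) (hG : ProperConvexLSC G)
    (M : H₁ →L[ℝ] H) (N : H₂ →L[ℝ] H) (b : H)
    (us : H₁) (vs : H₂) (hfeas : M us + N vs = b)
    (hFfin : F us ≠ ⊤ ∧ F us ≠ ⊥) (hGfin : G vs ≠ ⊤ ∧ G vs ≠ ⊥)
    (u : ℕ → H₁) (v : ℕ → H₂) (y x : ℕ → H)
    (hG' : ∀ k, -(ContinuousLinearMap.adjoint N (y k)) ∈ subdiff G (v k))
    (hF' : ∀ k, -(ContinuousLinearMap.adjoint M (x k)) ∈ subdiff F (u (k + 1)))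
    (hyx : Tendsto (fun k => ‖y k - x k‖) atTop (𝓝 0))
    (hres : Tendsto (fun k => ‖M (u (k + 1)) + N (v k) - b‖) atTop (𝓝 0))
    (hMu : WeakTendsto (fun k => M (u (k + 1))) (M us))
    (hybdd : ∃ C : ℝ, ∀ k, ‖y k‖ ≤ C) :
    Filter.limsup (fun k => F (u (k + 1)) + G (v k)) atTop ≤ F us + G vs :=
  primal_values_limsup_le_general F G M N b us vs hfeas hFfin hGfin u v y x hG' hF' hyx hres hMu
    hybdd
end
end

section
/- Let H, H₁, H₂ be real Hilbert spaces, F : H₁ → (−∞,+∞] and G : H₂ → (−∞,+∞] proper, convex, lower semicontinuous, M : H₁ → H and N : H₂ → H bounded linear operators with adjoints M* and N*, b ∈ H and γ > 0. Let sequences (u^{k+1}), (v^k), (y^k) satisfy −N*y^k ∈ ∂G(v^k) and −M*x^k ∈ ∂F(u^{k+1}) for all k, where x^k := y^k + γ(Mu^{k+1} + Nv^k − b). If F(u^{k+1}) + G(v^k) converges to a real number V as k → +∞, ‖Mu^{k+1} + Nv^k − b‖ → 0, and the sequences (Mu^{k+1}) and (y^k) are bounded, then −F*(−M*x^k) − G*(−N*y^k)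 − ⟨y^k, b⟩ → V as k → +∞. -/
open Filter Topology Pointwise
open scoped RealInnerProductSpace

noncomputable section

/-!
Under a subgradient inclusion `w ∈ ∂f(x)` the Fenchel–Young inequality is an equality,
`f*(w) = ⟪x, w⟫ - f(x)`. Applied to both inclusions, it turns the dual value at step `k`
into the real number `F(u^{k+1}) + G(v^k) + ⟪r^k, y^k + γ M u^{k+1}⟫`, where
`r^k = M u^{k+1} + N v^k - b` is the residual. The residual tends to zero while
`y^k + γ M u^{k+1}` stays bounded, so the correction term vanishes in the limit.
-/

section FenchelYoung

variable {E : Type*} [NormedAddCommGroup E] [InnerProductSpace ℝ E] {f : E → EReal} {x w : E}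

lemma ne_top_of_mem_subdiff (htop : ∃ z, f z ≠ ⊤) (hw : w ∈ subdiff f x) : f x ≠ ⊤ := by
  obtain ⟨z, hz⟩ := htop
  intro hx
  have := hw z
  rw [hx, EReal.top_add_coe, top_le_iff] at this
  exact hz this

lemma coe_toReal_of_mem_subdiff (hbot : ∀ z, f z ≠ ⊥) (htop : ∃ z, f z ≠ ⊤)
    (hw : w ∈ subdiff f x) : ((f x).toReal : EReal) = f x :=
  EReal.coe_toReal (ne_top_of_mem_subdiff htop hw) (hbot x)

lemma fconj_eq_of_mem_subdiff (hbot : ∀ z, f z ≠ ⊥) (htop : ∃ z, f z ≠ ⊤)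
    (hw : w ∈ subdiff f x) : fconj f w = ((⟪x, w⟫ - (f x).toReal : ℝ) : EReal) := by
  have hx := coe_toReal_of_mem_subdiff hbot htop hw
  refine le_antisymm (iSup_le fun z => ?_) ?_
  · rcases eq_or_ne (f z) ⊤ with hz | hz
    · simp [hz]
    · have hsub := hw z
      rw [← hx, ← EReal.coe_toReal hz (hbot z), ← EReal.coe_add, EReal.coe_le_coe_iff,
        inner_sub_right, real_inner_comm z w, real_inner_comm x w] at hsub
      rw [← EReal.coe_toReal hz (hbot z), ← EReal.coe_sub, EReal.coe_le_coe_iff]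
      linarith
  · rw [EReal.coe_sub, hx]
    exact le_iSup (fun z => ((⟪z, w⟫ : ℝ) : EReal) - f z) x

end FenchelYoung

lemma inner_neg_adjoint {E E' : Type*} [NormedAddCommGroup E] [InnerProductSpace ℝ E]
    [CompleteSpace E] [NormedAddCommGroup E'] [InnerProductSpace ℝ E'] [CompleteSpace E']
    (A : E →L[ℝ] E') (x : E) (z : E') :
    ⟪x, -(ContinuousLinearMap.adjoint A z)⟫ = -⟪A x, z⟫ := by
  rw [inner_neg_right, ContinuousLinearMap.adjoint_inner_right]

lemma dual_value_eq {H : Type*} [NormedAddCommGroup H] [InnerProductSpace ℝ H]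
    (p q b y : H) (γ a c : ℝ) :
    -(-⟪p, y + γ • (p + q - b)⟫ - a) - (-⟪q, y⟫ - c) - ⟪y, b⟫
      = a + c + ⟪p + q - b, y + γ • p⟫ := by
  simp only [inner_add_left, inner_add_right, inner_sub_left, inner_sub_right,
    real_inner_smul_right, real_inner_comm]
  ring

lemma tendsto_inner_zero_of_bounded {H ι : Type*} [NormedAddCommGroup H]
    [InnerProductSpace ℝ H] {l : Filter ι} {r z : ι → H}
    (hr : Tendsto (fun k => ‖r k‖) l (𝓝 0)) (hz : ∃ C, ∀ k, ‖z k‖ ≤ C) :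
    Tendsto (fun k => ⟪r k, z k⟫) l (𝓝 0) :=
  (tendsto_zero_iff_norm_tendsto_zero.mpr hr).op_zero_isBoundedUnder_le
    (isBoundedUnder_of hz) _ norm_inner_le_norm

theorem dual_values_convergence_general
    {H H₁ H₂ : Type*}
    [NormedAddCommGroup H] [InnerProductSpace ℝ H] [CompleteSpace H]
    [NormedAddCommGroup H₁] [InnerProductSpace ℝ H₁] [CompleteSpace H₁]
    [NormedAddCommGroup H₂] [InnerProductSpace ℝ H₂] [CompleteSpace H₂]
    (F : H₁ → EReal) (G : H₂ → EReal)
    (hF : ProperConvexLSC F) (hG : ProperConvexLSC G)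
    (M : H₁ →L[ℝ] H) (N : H₂ →L[ℝ] H) (b : H) (γ : ℝ)
    (u : ℕ → H₁) (v : ℕ → H₂) (y : ℕ → H)
    (hG' : ∀ k, -(ContinuousLinearMap.adjoint N (y k)) ∈ subdiff G (v k))
    (hF' : ∀ k, -(ContinuousLinearMap.adjoint M
        (y k + γ • (M (u (k + 1)) + N (v k) - b))) ∈ subdiff F (u (k + 1)))
    (V : ℝ)
    (hV : Tendsto (fun k => F (u (k + 1)) + G (v k)) atTop (𝓝 (V : EReal)))
    (hres : Tendsto (fun k => ‖M (u (k + 1)) + N (v k) - b‖) atTop (𝓝 0))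
    (hMubdd : ∃ C : ℝ, ∀ k, ‖M (u (k + 1))‖ ≤ C)
    (hybdd : ∃ C : ℝ, ∀ k, ‖y k‖ ≤ C) :
    Tendsto (fun k =>
        - fconj F (-(ContinuousLinearMap.adjoint M
            (y k + γ • (M (u (k + 1)) + N (v k) - b))))
        - fconj G (-(ContinuousLinearMap.adjoint N (y k)))
        - ((⟪y k, b⟫ : ℝ) : EReal))
      atTop (𝓝 (V : EReal)) := by
  obtain ⟨hFbot, hFtop, -, -⟩ := hF
  obtain ⟨hGbot, hGtop, -, -⟩ := hG
  obtain ⟨CM, hCM⟩ := hMubdd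
  obtain ⟨Cy, hCy⟩ := hybdd
  have hprimal : Tendsto (fun k => (F (u (k + 1))).toReal + (G (v k)).toReal) atTop (𝓝 V) := by
    rw [← EReal.tendsto_coe]
    refine hV.congr fun k => ?_
    rw [EReal.coe_add, coe_toReal_of_mem_subdiff hFbot hFtop (hF' k),
      coe_toReal_of_mem_subdiff hGbot hGtop (hG' k)]
  have hcorr : Tendsto (fun k => ⟪M (u (k + 1)) + N (v k) - b, y k + γ • M (u (k + 1))⟫)
      atTop (𝓝 0) := by
    refine tendsto_inner_zero_of_bounded hres ⟨Cy + ‖γ‖ * CM, fun k => ?_⟩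
    calc ‖y k + γ • M (u (k + 1))‖ ≤ ‖y k‖ + ‖γ‖ * ‖M (u (k + 1))‖ := by
          rw [← norm_smul]; exact norm_add_le _ _
      _ ≤ Cy + ‖γ‖ * CM := by gcongr; exacts [hCy k, hCM k]
  refine (EReal.tendsto_coe.mpr (by simpa using hprimal.add hcorr)).congr fun k => ?_
  rw [fconj_eq_of_mem_subdiff hFbot hFtop (hF' k), fconj_eq_of_mem_subdiff hGbot hGtop (hG' k),
    inner_neg_adjoint, inner_neg_adjoint, ← dual_value_eq]
  norm_cast

theorem dual_values_convergence
    {H H₁ H₂ : Type*}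
    [NormedAddCommGroup H] [InnerProductSpace ℝ H] [CompleteSpace H]
    [NormedAddCommGroup H₁] [InnerProductSpace ℝ H₁] [CompleteSpace H₁]
    [NormedAddCommGroup H₂] [InnerProductSpace ℝ H₂] [CompleteSpace H₂]
    (F : H₁ → EReal) (G : H₂ → EReal)
    (hF : ProperConvexLSC F) (hG : ProperConvexLSC G)
    (M : H₁ →L[ℝ] H) (N : H₂ →L[ℝ] H) (b : H) (γ : ℝ) (hγ : 0 < γ)
    (u : ℕ → H₁) (v : ℕ → H₂) (y : ℕ → H)
    (hG' : ∀ k, -(ContinuousLinearMap.adjoint N (y k)) ∈ subdiff G (v k))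
    (hF' : ∀ k, -(ContinuousLinearMap.adjoint M
        (y k + γ • (M (u (k + 1)) + N (v k) - b))) ∈ subdiff F (u (k + 1)))
    (V : ℝ)
    (hV : Tendsto (fun k => F (u (k + 1)) + G (v k)) atTop (𝓝 (V : EReal)))
    (hres : Tendsto (fun k => ‖M (u (k + 1)) + N (v k) - b‖) atTop (𝓝 0))
    (hMubdd : ∃ C : ℝ, ∀ k, ‖M (u (k + 1))‖ ≤ C)
    (hybdd : ∃ C : ℝ, ∀ k, ‖y k‖ ≤ C) :
    Tendsto (fun k =>
        - fconj F (-(ContinuousLinearMap.adjoint M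
            (y k + γ • (M (u (k + 1)) + N (v k) - b))))
        - fconj G (-(ContinuousLinearMap.adjoint N (y k)))
        - ((⟪y k, b⟫ : ℝ) : EReal))
      atTop (𝓝 (V : EReal)) :=
  dual_values_convergence_general F G hF hG M N b γ u v y hG' hF' V hV hres hMubdd hybdd
end
end
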